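/- Let N = 3 and d = 3, and let (p_k)_{k=0}^{6} = (1, 1/4, 1/8, 1/9, 1/8, 1/4, 1). Then the diagonal restricted Dicke state ρ = Σ_{k=0}^{6} p_k |R_{3,3;k}⟩⟨R_{3,3;k}| is 1-PPT but is not fully separable. In particular, for d ≥ 3 and odd N, the (N−1)/2-PPT property of diagonal restricted Dicke states does not imply full separability. -/

import Mathlib

open scoped BigOperators ComplexConjugate ComplexOrder Matrix
noncomputable section
open MeasureTheory

namespace DSym

/-- Index set of the computational basis of `(ℂ^d)^{⊗N}`. -/
abbrev Idx (d N : ℕ) := Fin N → Fin d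

/-- `|i| = i_1 + ⋯ + i_N`. -/
def wsum {d N : ℕ} (i : Idx d N) : ℕ := ∑ j, (i j : ℕ)

/-- `C(N,k)_d = #{i ∈ {0,…,d−1}^N : |i| = k}`. -/
def Ccount (d N k : ℕ) : ℕ := (Finset.univ.filter (fun i : Idx d N => wsum i = k)).card

/-- The D-symmetrizator `P_D`. -/
def PD (d N : ℕ) : Matrix (Idx d N) (Idx d N) ℂ :=
  Matrix.of fun i j => if wsum i = wsum j then ((Ccount d N (wsum j) : ℂ))⁻¹ else 0

/-- The symmetrizator `P_S`. -/
def PS (d N : ℕ) : Matrix (Idx d N) (Idx d N) ℂ :=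
  Matrix.of fun i j =>
    ((N.factorial : ℂ))⁻¹ *
      ((Finset.univ.filter (fun σ : Equiv.Perm (Fin N) => i = fun k => j (σ k))).card : ℂ)

/-- The product state `|ξ^1⟩⟨ξ^1| ⊗ ⋯ ⊗ |ξ^N⟩⟨ξ^N|` as a matrix. -/
def prodProj {d N : ℕ} (ξ : Fin N → (Fin d → ℂ)) : Matrix (Idx d N) (Idx d N) ℂ :=
  Matrix.of fun i i' => ∏ j, ξ j (i j) * conj (ξ j (i' j))

/-- Full separability of a multipartite state. -/
def FullySep {d N : ℕ} (ρ : Matrix (Idx d N) (Idx d N) ℂ) : Prop :=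
  ∃ (n : ℕ) (lam : Fin n → ℝ) (ξ : Fin n → Fin N → (Fin d → ℂ)),
    (∀ α, 0 < lam α) ∧ (∀ α j, ∑ x, Complex.normSq (ξ α j x) = 1) ∧
      ρ = ∑ α, (lam α : ℂ) • prodProj (ξ α)

/-- The restricted Dicke vector `|R_{N,d;k}⟩`. -/
def Rvec (d N k : ℕ) : Idx d N → ℂ := fun i => if wsum i = k then 1 else 0

/-- The rank-one operator `|R_{N,d;k}⟩⟨R_{N,d;k}|`. -/
def RProj (d N k : ℕ) : Matrix (Idx d N) (Idx d N) ℂ :=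
  Matrix.vecMulVec (Rvec d N k) (star (Rvec d N k))

/-- Diagonal restricted Dicke state with coefficients `p`. -/
def dickeDiag (d N : ℕ) (p : ℕ → ℝ) : Matrix (Idx d N) (Idx d N) ℂ :=
  ∑ k ∈ Finset.range (N * (d - 1) + 1), (p k : ℂ) • RProj d N k

/-- Partial transposition of the first `m` tensor factors (entrywise). -/
def Gamma {d N : ℕ} (m : ℕ) (ρ : Matrix (Idx d N) (Idx d N) ℂ) :
    Matrix (Idx d N) (Idx d N) ℂ :=
  Matrix.of fun i j =>
    ρ (fun k => if (k : ℕ) < m then j k else i k) (fun k => if (k : ℕ) < m then i k else j k)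

/-- D-symmetry of a state: `ρ = P_D ρ P_D`. -/
def IsDSymm {d N : ℕ} (ρ : Matrix (Idx d N) (Idx d N) ℂ) : Prop :=
  ρ = PD d N * ρ * PD d N

/-- A pure fully separable D-symmetric state `σ = (|ξ⟩⟨ξ|)^{⊗N}`, `ξ` a unit vector. -/
def PureDSymmProd {d N : ℕ} (σ : Matrix (Idx d N) (Idx d N) ℂ) : Prop :=
  ∃ ξ : Fin d → ℂ,
    (∑ x, Complex.normSq (ξ x) = 1) ∧ σ = prodProj (fun _ : Fin N => ξ) ∧ IsDSymm σ

/-- Entanglement witness for the D-symmetric system. -/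
def IsDWitness {d N : ℕ} (W : Matrix (Idx d N) (Idx d N) ℂ) : Prop :=
  W.IsHermitian ∧ W = PD d N * W * PD d N ∧
    ∀ σ : Matrix (Idx d N) (Idx d N) ℂ, PureDSymmProd σ → 0 ≤ (W * σ).trace

/-- The dual restricted Dicke vector. -/
def Rtilde (d N k : ℕ) : Idx d N → ℂ := ((Ccount d N k : ℂ))⁻¹ • Rvec d N k

/-- Solution of the generalized moment problem on `[0,∞)`. -/
def IsGenMomentSolution (n : ℕ) (p : ℕ → ℝ) : Prop :=
  ∃ (σ : Measure ℝ) (M : ℝ), IsFiniteMeasure σ ∧ σ {x | x < 0} = 0 ∧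
    (∀ k ≤ n, Integrable (fun t => t ^ k) σ) ∧ 0 ≤ M ∧
    (∀ k < n, p k = ∫ t, t ^ k ∂σ) ∧ p n = (∫ t, t ^ n ∂σ) + M

/-- Solution of the strict moment problem on `[0,∞)`. -/
def IsStrictMomentSolution (n : ℕ) (p : ℕ → ℝ) : Prop :=
  ∃ σ : Measure ℝ, IsFiniteMeasure σ ∧ σ {x | x < 0} = 0 ∧
    (∀ k ≤ n, Integrable (fun t => t ^ k) σ) ∧ (∀ k ≤ n, p k = ∫ t, t ^ k ∂σ)


/-- The normalization constant `C_z = (Σ_{i=0}^{d−1} |z|^{2i})^{−1/2}`. -/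
def Cz (d : ℕ) (z : ℂ) : ℝ := (∑ j ∈ Finset.range d, ‖z‖ ^ (2 * j)) ^ (-(1/2 : ℝ))

/-- The vector `ζ_z = C_z Σ_{i=0}^{d−1} z^i |i⟩`. -/
def zeta (d : ℕ) (z : ℂ) : Fin d → ℂ := fun i => (Cz d z : ℂ) * z ^ (i : ℕ)

/-- The basis vector `|d−1⟩`. -/
def topVec (d : ℕ) : Fin d → ℂ := fun x => if (x : ℕ) = d - 1 then 1 else 0

/-- Sum of the first `m` coordinates of a tuple. -/
def wsumFirst {d N : ℕ} (m : ℕ) (i : Idx d N) : ℕ :=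
  ∑ j ∈ Finset.univ.filter (fun j : Fin N => (j : ℕ) < m), (i j : ℕ)

/-- Sum of the last `N − m` coordinates of a tuple. -/
def wsumLast {d N : ℕ} (m : ℕ) (i : Idx d N) : ℕ :=
  ∑ j ∈ Finset.univ.filter (fun j : Fin N => m ≤ (j : ℕ)), (i j : ℕ)

/-- The vector `|R_{m,d;a}⟩ ⊗ |R_{N−m,d;b}⟩`, viewed inside `(ℂ^d)^{⊗N}`. -/
def splitVec (d N m : ℕ) (a b : ℤ) : Idx d N → ℂ :=
  fun i => if (wsumFirst m i : ℤ) = a ∧ (wsumLast m i : ℤ) = b then 1 else 0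

/-- The operator `A_s` from the decomposition of `Γ_m(ρ)`. -/
def Amat (d N m : ℕ) (p : ℕ → ℝ) (s : ℤ) : Matrix (Idx d N) (Idx d N) ℂ :=
  ∑ k ∈ Finset.Icc (max 0 (-s)) (min ((m : ℤ) * ((d : ℤ) - 1)) ((((N : ℤ) - (m : ℤ)) * ((d : ℤ) - 1)) - s)),
  ∑ l ∈ Finset.Icc (max 0 (-s)) (min ((m : ℤ) * ((d : ℤ) - 1)) ((((N : ℤ) - (m : ℤ)) * ((d : ℤ) - 1)) - s)),
    (p (k + l + s).toNat : ℂ) •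
      Matrix.vecMulVec (splitVec d N m k (k + s)) (star (splitVec d N m l (l + s)))

/-- The permutation unitary `F_σ`, `F_σ|ξ_1,…,ξ_N⟩ = |ξ_{σ⁻¹(1)},…,ξ_{σ⁻¹(N)}⟩`. -/
def Fmat (d N : ℕ) (σ : Equiv.Perm (Fin N)) : Matrix (Idx d N) (Idx d N) ℂ :=
  Matrix.of fun x i => if x = fun k => i (σ.symm k) then 1 else 0

/-- Partial transposition with respect to the binary string `b`. -/
def partialT {d N : ℕ} (b : Fin N → Bool) (ρ : Matrix (Idx d N) (Idx d N) ℂ) :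
    Matrix (Idx d N) (Idx d N) ℂ :=
  Matrix.of fun i j => ρ (fun k => if b k then j k else i k) (fun k => if b k then i k else j k)

end DSym
end


/-!
`Γ₁ ρ` only couples tuples with the same value of `s = i₂ + i₃ - i₁`, and on such a block it is the
Hankel matrix `(p_{i₁ + j₁ + s})` of size at most 3, which an explicit integer LDLᵀ factorisation
shows to be positive semidefinite.

If `ρ = ∑ λ_α |v_α⟩⟨v_α|` with product vectors `v_α`, then `ρ` is constant on each block
`|i| = |j| = k`, so `∑ λ_α |v_α(i) - v_α(j)|² = ρ_ii + ρ_jj - ρ_ij - ρ_ji = 0` and every `v_α` is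
constant on the sectors `|i| = k`. Such a product vector is either `c z^{|i|}` or vanishes below the
top sector, so the Hankel matrix `(|v_α|²_{a+b})_{a,b ≤ 3}` of its sector values is positive
semidefinite. Summing over `α`, so would be `(p_{a+b})_{a,b ≤ 3}`; but its quadratic form at
`(1, -12, 11, -1)` is `-13/72`.
-/

namespace DSym

open Matrix Finset

section DickeEntries

variable {d N : ℕ}

lemma wsum_eq_wsumFirst_add_wsumLast (m : ℕ) (i : Idx d N) :
    wsum i = wsumFirst m i + wsumLast m i := by
  rw [wsum, wsumFirst, wsumLast,
    ← sum_filter_add_sum_filter_not univ (fun j : Fin N => (j : ℕ) < m)]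
  simp only [not_lt]

lemma wsum_le (i : Idx d N) : wsum i ≤ N * (d - 1) :=
  calc wsum i ≤ ∑ _j : Fin N, (d - 1) := sum_le_sum fun j _ => Nat.le_sub_one_of_lt (i j).isLt
    _ = N * (d - 1) := by simp

lemma dickeDiag_apply (p : ℕ → ℝ) (i j : Idx d N) :
    dickeDiag d N p i j = if wsum i = wsum j then (p (wsum i) : ℂ) else 0 := by
  simp only [dickeDiag, RProj, Matrix.sum_apply, Matrix.smul_apply, vecMulVec_apply]
  rw [sum_eq_single (wsum i)]
  · by_cases h : wsum i = wsum j <;> simp [Rvec, h, Ne.symm]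
  · intro k _ hk
    simp [Rvec, Ne.symm hk]
  · exact fun h => absurd (mem_range.2 (Nat.lt_succ_of_le (wsum_le i))) h

lemma gamma_dickeDiag_apply (m : ℕ) (p : ℕ → ℝ) (i j : Idx d N) :
    Gamma m (dickeDiag d N p) i j =
      if wsumFirst m j + wsumLast m i = wsumFirst m i + wsumLast m j
      then (p (wsumFirst m j + wsumLast m i) : ℂ) else 0 := by
  have hswap (i j : Idx d N) :
      wsum (fun k => if (k : ℕ) < m then j k else i k) = wsumFirst m j + wsumLast m i := by
    rw [wsum_eq_wsumFirst_add_wsumLast m, wsumFirst, wsumLast, wsumFirst, wsumLast]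
    congr 1 <;> refine sum_congr rfl fun k hk => ?_
    · simp [(mem_filter.1 hk).2]
    · simp [not_lt.2 (mem_filter.1 hk).2]
  simp only [Gamma, of_apply, dickeDiag_apply, hswap]

end DickeEntries

section RankOneSums

variable {n ι : Type*}

lemma posSemidef_sum_smul_vecMulVec [Finite n] (s : Finset ι) (c : ι → ℝ)
    (hc : ∀ t ∈ s, 0 ≤ c t) (v : ι → n → ℂ) :
    (∑ t ∈ s, c t • vecMulVec (v t) (star (v t))).PosSemidef :=
  posSemidef_sum s fun t ht => (posSemidef_vecMulVec_self_star (v t)).smul (hc t ht)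

variable [Fintype ι]

lemma sum_smul_vecMulVec_apply (lam : ι → ℝ) (v : ι → n → ℂ) (i j : n) :
    (∑ α, (lam α : ℂ) • vecMulVec (v α) (star (v α))) i j =
      ∑ α, (lam α : ℂ) * (v α i * conj (v α j)) := by
  simp [Matrix.sum_apply, vecMulVec_apply]

lemma sum_smul_vecMulVec_apply_self (lam : ι → ℝ) (v : ι → n → ℂ) (i : n) :
    (∑ α, (lam α : ℂ) • vecMulVec (v α) (star (v α))) i i =
      ((∑ α, lam α * Complex.normSq (v α i) : ℝ) : ℂ) := by
  rw [sum_smul_vecMulVec_apply]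
  push_cast [Complex.mul_conj]
  rfl

lemma apply_eq_of_eq_sum_smul_vecMulVec {lam : ι → ℝ} (hlam : ∀ α, 0 < lam α) {v : ι → n → ℂ}
    {M : Matrix n n ℂ} (hM : M = ∑ α, (lam α : ℂ) • vecMulVec (v α) (star (v α))) {i j : n}
    (h : M i i + M j j = M i j + M j i) (α : ι) : v α i = v α j := by
  have hsum : ∑ β, lam β * Complex.normSq (v β i - v β j) = 0 := by
    apply Complex.ofReal_injective
    simp only [hM, sum_smul_vecMulVec_apply] at h
    have hexpand : ∀ β, ((lam β * Complex.normSq (v β i - v β j) : ℝ) : ℂ) =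
        (lam β : ℂ) * (v β i * conj (v β i)) + (lam β : ℂ) * (v β j * conj (v β j)) -
          ((lam β : ℂ) * (v β i * conj (v β j)) + (lam β : ℂ) * (v β j * conj (v β i))) := by
      intro β
      push_cast [← Complex.mul_conj, map_sub]
      ring
    rw [Complex.ofReal_sum, sum_congr rfl fun β _ => hexpand β, sum_sub_distrib, sum_add_distrib,
      sum_add_distrib, h, sub_self, Complex.ofReal_zero]
  have hα := (sum_eq_zero_iff_of_nonneg fun β _ =>
    mul_nonneg (hlam β).le (Complex.normSq_nonneg _)).1 hsum α (mem_univ α)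
  rw [mul_eq_zero, or_iff_right (hlam α).ne', Complex.normSq_eq_zero, sub_eq_zero] at hα
  exact hα

end RankOneSums

section HankelForm

def hankelForm (G : ℕ → ℝ) (n : ℕ) (w : ℕ → ℝ) : ℝ :=
  ∑ a ∈ range (n + 1), ∑ b ∈ range (n + 1), w a * w b * G (a + b)

variable {G G' : ℕ → ℝ} {n : ℕ} (w : ℕ → ℝ)

lemma hankelForm_congr (h : ∀ k ≤ 2 * n, G k = G' k) : hankelForm G n w = hankelForm G' n w := by
  unfold hankelForm
  refine sum_congr rfl fun a ha => sum_congr rfl fun b hb => ?_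
  rw [mem_range] at ha hb
  rw [h _ (by omega)]

lemma hankelForm_sum_mul {ι : Type*} (s : Finset ι) (lam : ι → ℝ) (G : ι → ℕ → ℝ) :
    hankelForm (fun k => ∑ α ∈ s, lam α * G α k) n w = ∑ α ∈ s, lam α * hankelForm (G α) n w := by
  simp only [hankelForm, mul_sum]
  symm
  rw [sum_comm]
  refine sum_congr rfl fun a _ => ?_
  rw [sum_comm]
  exact sum_congr rfl fun b _ => sum_congr rfl fun α _ => by ring

lemma hankelForm_geometric {c r : ℝ} (h : ∀ k ≤ 2 * n, G k = c * r ^ k) :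
    hankelForm G n w = c * (∑ a ∈ range (n + 1), w a * r ^ a) ^ 2 := by
  rw [hankelForm_congr w h, hankelForm, sq, sum_mul_sum, mul_sum]
  refine sum_congr rfl fun a _ => ?_
  rw [mul_sum]
  exact sum_congr rfl fun b _ => by ring

lemma hankelForm_of_eq_zero (h : ∀ k < 2 * n, G k = 0) :
    hankelForm G n w = w n ^ 2 * G (2 * n) := by
  have hrow : ∀ a ∈ range (n + 1), a ≠ n → ∑ b ∈ range (n + 1), w a * w b * G (a + b) = 0 :=
    fun a ha han => sum_eq_zero fun b hb => by
      rw [mem_range] at ha hb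
      rw [h _ (by omega), mul_zero]
  rw [hankelForm, sum_eq_single_of_mem n (self_mem_range_succ n) hrow,
    sum_eq_single_of_mem n (self_mem_range_succ n) fun b hb hbn => by
      rw [mem_range] at hb
      rw [h _ (by omega), mul_zero]]
  ring_nf

end HankelForm

section ProductVectors

variable {d N : ℕ}

def prodVec (ξ : Fin N → Fin d → ℂ) : Idx d N → ℂ := fun i => ∏ j, ξ j (i j)

lemma prodProj_eq_vecMulVec (ξ : Fin N → Fin d → ℂ) :
    prodProj ξ = vecMulVec (prodVec ξ) (star (prodVec ξ)) := by
  ext i i'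
  simp [prodProj, prodVec, vecMulVec_apply, prod_mul_distrib]

lemma prodVec_eq_mul_pow [NeZero d] {ξ : Fin N → Fin d → ℂ} {r : ℂ}
    (h : ∀ j a, ξ j a = ξ j 0 * r ^ (a : ℕ)) (i : Idx d N) :
    prodVec ξ i = (∏ j, ξ j 0) * r ^ wsum i := by
  simp only [prodVec, wsum, h _ (i _), prod_mul_distrib, prod_pow_eq_pow_sum]

end ProductVectors

lemma prodVec_three (ξ : Fin 3 → Fin 3 → ℂ) (a b c : Fin 3) :
    prodVec ξ ![a, b, c] = ξ 0 a * ξ 1 b * ξ 2 c := by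
  simp [prodVec, Fin.prod_univ_three]

lemma exists_wsum_eq_apply_eq_zero :
    ∀ i : Idx 3 3, wsum i ≤ 4 → ∀ s, ∃ i' : Idx 3 3, wsum i' = wsum i ∧ i' s = 0 := by
  decide

lemma prodVec_geometric_or_top (ξ : Fin 3 → Fin 3 → ℂ)
    (hξ : ∀ i i', wsum i = wsum i' → prodVec ξ i = prodVec ξ i') :
    (∃ c r : ℂ, ∀ i, prodVec ξ i = c * r ^ wsum i) ∨ ∀ i, wsum i ≤ 5 → prodVec ξ i = 0 := by
  have hex (a b c a' b' c' : Fin 3) (h : (a : ℕ) + b + c = a' + b' + c') :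
      ξ 0 a * ξ 1 b * ξ 2 c = ξ 0 a' * ξ 1 b' * ξ 2 c' := by
    rw [← prodVec_three, ← prodVec_three]
    exact hξ _ _ (by simp [wsum, Fin.sum_univ_three]; omega)
  by_cases h0 : ∏ s, ξ s 0 = 0
  · right
    obtain ⟨s, -, hs⟩ := prod_eq_zero_iff.1 h0
    have hlow : ∀ i, wsum i ≤ 4 → prodVec ξ i = 0 := fun i hi => by
      obtain ⟨i', hi', hi's⟩ := exists_wsum_eq_apply_eq_zero i hi s
      rw [hξ i i' hi'.symm]
      exact prod_eq_zero (mem_univ s) (by rw [hi's, hs])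
    intro i hi
    rcases hi.lt_or_eq with hi | hi
    · exact hlow i (by omega)
    -- squaring the sector-5 value and exchanging coordinates gives (sector 4) * (sector 6)
    refine mul_self_eq_zero.1 ?_
    calc prodVec ξ i * prodVec ξ i = prodVec ξ ![1, 2, 2] * prodVec ξ ![2, 1, 2] :=
          congrArg₂ (· * ·) (hξ _ _ (by rw [hi]; decide)) (hξ _ _ (by rw [hi]; decide))
      _ = prodVec ξ ![1, 1, 2] * prodVec ξ ![2, 2, 2] := by simp only [prodVec_three]; ring
      _ = 0 := by rw [hlow _ (by decide), zero_mul]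
  · left
    simp only [Fin.prod_univ_three, mul_ne_zero_iff] at h0
    obtain ⟨⟨hx, hy⟩, hz⟩ := h0
    obtain ⟨r, hx1⟩ : ∃ r, ξ 0 1 = ξ 0 0 * r := ⟨ξ 0 1 / ξ 0 0, by field_simp⟩
    have hy1 : ξ 1 1 = ξ 1 0 * r := mul_left_cancel₀ (mul_ne_zero hx hz) <| by
      linear_combination hex 0 1 0 1 0 0 rfl + ξ 1 0 * ξ 2 0 * hx1
    have hz1 : ξ 2 1 = ξ 2 0 * r := mul_left_cancel₀ (mul_ne_zero hx hy) <| by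
      linear_combination hex 0 0 1 1 0 0 rfl + ξ 1 0 * ξ 2 0 * hx1
    have hx2 : ξ 0 2 = ξ 0 0 * r ^ 2 := mul_left_cancel₀ (mul_ne_zero hy hz) <| by
      linear_combination hex 2 0 0 1 1 0 rfl + ξ 1 1 * ξ 2 0 * hx1 + ξ 0 0 * r * ξ 2 0 * hy1
    have hy2 : ξ 1 2 = ξ 1 0 * r ^ 2 := mul_left_cancel₀ (mul_ne_zero hx hz) <| by
      linear_combination hex 0 2 0 1 1 0 rfl + ξ 1 1 * ξ 2 0 * hx1 + ξ 0 0 * r * ξ 2 0 * hy1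
    have hz2 : ξ 2 2 = ξ 2 0 * r ^ 2 := mul_left_cancel₀ (mul_ne_zero hx hy) <| by
      linear_combination hex 0 0 2 1 0 1 rfl + ξ 1 0 * ξ 2 1 * hx1 + ξ 0 0 * r * ξ 1 0 * hz1
    refine ⟨∏ j, ξ j 0, r, prodVec_eq_mul_pow fun j a => ?_⟩
    fin_cases j <;> fin_cases a <;> simp [hx1, hy1, hz1, hx2, hy2, hz2]

def sectorRep (k : ℕ) : Idx 3 3 := fun j => ⟨min (k - 2 * j) 2, by omega⟩

lemma wsum_sectorRep : ∀ k ≤ 6, wsum (sectorRep k) = k := by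
  decide

lemma hankelForm_normSq_prodVec_nonneg (ξ : Fin 3 → Fin 3 → ℂ)
    (hξ : ∀ i i', wsum i = wsum i' → prodVec ξ i = prodVec ξ i') (w : ℕ → ℝ) :
    0 ≤ hankelForm (fun k => Complex.normSq (prodVec ξ (sectorRep k))) 3 w := by
  rcases prodVec_geometric_or_top ξ hξ with ⟨c, r, h⟩ | h
  · rw [hankelForm_geometric w (c := Complex.normSq c) (r := Complex.normSq r) fun k hk => by
      rw [h, wsum_sectorRep k hk, map_mul, map_pow]]
    exact mul_nonneg (Complex.normSq_nonneg _) (sq_nonneg _)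
  · rw [hankelForm_of_eq_zero w fun k hk => by
      rw [h _ (by rw [wsum_sectorRep k (by omega)]; omega), map_zero]]
    exact mul_nonneg (sq_nonneg _) (Complex.normSq_nonneg _)

theorem hankelForm_nonneg_of_fullySep {p : ℕ → ℝ} (hρ : FullySep (dickeDiag 3 3 p))
    (w : ℕ → ℝ) : 0 ≤ hankelForm p 3 w := by
  obtain ⟨n, lam, ξ, hlam, -, hρ⟩ := hρ
  simp only [prodProj_eq_vecMulVec] at hρ
  have hsec (α : Fin n) (i i' : Idx 3 3) (h : wsum i = wsum i') :
      prodVec (ξ α) i = prodVec (ξ α) i' :=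
    apply_eq_of_eq_sum_smul_vecMulVec hlam hρ (by simp only [dickeDiag_apply, h, if_true]) α
  have hp (k : ℕ) (hk : k ≤ 2 * 3) :
      p k = ∑ α, lam α * Complex.normSq (prodVec (ξ α) (sectorRep k)) := by
    have hkk := congrFun (congrFun hρ (sectorRep k)) (sectorRep k)
    rw [dickeDiag_apply, if_pos rfl, wsum_sectorRep k hk, sum_smul_vecMulVec_apply_self] at hkk
    exact_mod_cast hkk
  rw [hankelForm_congr w hp, hankelForm_sum_mul]
  exact sum_nonneg fun α _ =>
    mul_nonneg (hlam α).le (hankelForm_normSq_prodVec_nonneg _ (hsec α) w)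

noncomputable def exampleWeights : ℕ → ℝ := fun k => [1, 1/4, 1/8, 1/9, 1/8, 1/4, 1].getD k 0

def scaledExampleWeights : ℕ → ℤ :=
  fun k => [616896, 154224, 77112, 68544, 77112, 154224, 616896].getD k 0

lemma exampleWeights_eq_div (k : ℕ) : exampleWeights k = scaledExampleWeights k / 616896 := by
  rcases lt_or_ge k 7 with hk | hk
  · interval_cases k <;> norm_num [exampleWeights, scaledExampleWeights]
  · simp [exampleWeights, scaledExampleWeights, hk]

/- Integer LDLᵀ factorisations of the Hankel blocks `(616896 p_{a+a'+s})_{a,a'}` of `Γ₁ ρ`, where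
`s = i₂ + i₃ - i₁` labels the block and `a = i₁` the row; term `t` contributes
`ldlPivot t • v vᵀ` with `v a = ldlColumn t a` supported on the block `ldlShift t`. -/
def ldlShift : Fin 15 → ℤ := ![-2, -1, -1, 0, 0, 0, 1, 1, 1, 2, 2, 2, 3, 3, 4]

def ldlPivot : Fin 15 → ℕ :=
  ![77112, 38556, 29988, 9639, 119, 4522, 476, 612, 62560, 952, 56, 86184, 1071, 67473, 77112]

def ldlColumn : Fin 15 → ℕ → ℤ := fun t a =>
  (![[0, 0, 1], [0, 2, 1], [0, 0, 1], [8, 2, 1], [0, 18, 23], [0, 0, 1], [18, 9, 8], [0, 7, 10],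
    [0, 0, 1], [9, 8, 9], [0, 17, 90], [0, 0, 1], [8, 9, 0], [0, 1, 0], [1, 0, 0]] t).getD a 0

def ldlEntry (t : Fin 15) (a c : ℕ) : ℤ := if (c : ℤ) - a = ldlShift t then ldlColumn t a else 0

lemma ldlEntry_spec : ∀ a < 3, ∀ c < 5, ∀ a' < 3, ∀ c' < 5,
    (if a' + c = a + c' then scaledExampleWeights (a' + c) else 0) =
      ∑ t, (ldlPivot t : ℤ) * (ldlEntry t a c * ldlEntry t a' c') := by
  decide

lemma wsumFirst_one_lt_and_wsumLast_one_lt (i : Idx 3 3) :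
    wsumFirst 1 i < 3 ∧ wsumLast 1 i < 5 := by
  revert i
  decide

def ldlVec (t : Fin 15) (i : Idx 3 3) : ℂ := ldlEntry t (wsumFirst 1 i) (wsumLast 1 i)

lemma gamma_one_dickeDiag_exampleWeights :
    Gamma 1 (dickeDiag 3 3 exampleWeights) =
      ∑ t, ((ldlPivot t : ℝ) / 616896) • vecMulVec (ldlVec t) (star (ldlVec t)) := by
  ext i j
  obtain ⟨ha, hc⟩ := wsumFirst_one_lt_and_wsumLast_one_lt i
  obtain ⟨ha', hc'⟩ := wsumFirst_one_lt_and_wsumLast_one_lt j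
  have h := congrArg (fun z : ℤ => (z : ℂ) / 616896) (ldlEntry_spec _ ha _ hc _ ha' _ hc')
  simp only [apply_ite (fun z : ℤ => (z : ℂ) / 616896), Int.cast_zero, zero_div] at h
  rw [gamma_dickeDiag_apply, Matrix.sum_apply]
  simp only [exampleWeights_eq_div]
  push_cast at h ⊢
  rw [h, sum_div]
  refine sum_congr rfl fun t _ => ?_
  simp only [Matrix.smul_apply, vecMulVec_apply, ldlVec, Pi.star_apply, star_intCast,
    Complex.real_smul, Complex.ofReal_div, Complex.ofReal_natCast, Complex.ofReal_ofNat]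
  ring

lemma posSemidef_gamma_one_dickeDiag_exampleWeights :
    (Gamma 1 (dickeDiag 3 3 exampleWeights)).PosSemidef := by
  rw [gamma_one_dickeDiag_exampleWeights]
  exact posSemidef_sum_smul_vecMulVec _ _ (fun t _ => by positivity) _

lemma hankelForm_exampleWeights_neg :
    hankelForm exampleWeights 3 (fun a => [1, -12, 11, -1].getD a 0) < 0 := by
  norm_num [hankelForm, exampleWeights, sum_range_succ]

theorem stmt18 (p : ℕ → ℝ)
    (hp : p = fun k => [1, 1/4, 1/8, 1/9, 1/8, 1/4, 1].getD k 0) :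
    (Gamma 1 (dickeDiag 3 3 p)).PosSemidef ∧ ¬ FullySep (dickeDiag 3 3 p) := by
  subst hp
  exact ⟨posSemidef_gamma_one_dickeDiag_exampleWeights, fun hρ =>
    hankelForm_exampleWeights_neg.not_ge (hankelForm_nonneg_of_fullySep hρ _)⟩

end DSym
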